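/- Let ℓ be a prime and n ≥ 1. Suppose A and B are orders of rank n in a number field K such that ℤ + ℓA ⊆ B and ℤ + ℓB ⊆ A. Then the index [A + B : A ∩ B] divides ℓ^(n−1). (Here A + B is the order generated by A and B inside K, equal to the ℤ-module sum since ℓA·B ⊆ B etc.) -/

import Mathlib

open Pointwise

/-- The index [N : N ∩ M] of one ℤ-submodule of K relative to another. -/
noncomputable def modIndex {K : Type*} [AddCommGroup K] [Module ℤ K]
    (N M : Submodule ℤ K) : ℕ :=
  (M.toAddSubgroup.addSubgroupOf N.toAddSubgroup).index

lemma toAddSubgroup_sup' {K : Type*} [AddCommGroup K] (p q : Submodule ℤ K) :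
    (p ⊔ q).toAddSubgroup = p.toAddSubgroup ⊔ q.toAddSubgroup := by
  ext x
  simp [Submodule.mem_sup, AddSubgroup.mem_sup]

lemma index_dvd_pow_of_smul_mem {K : Type*} [Field K] [NumberField K]
    (O : Submodule ℤ K) [Module.Finite ℤ O] (T : AddSubgroup ↥O.toAddSubgroup) (n : ℕ)
    (hrk : Module.finrank ℤ O ≤ n) (ℓ : ℕ)
    (hT : ∀ x : ↥O, (ℓ:ℤ) • x ∈ T) :
    T.index ∣ ℓ ^ n := by
  classical
  set ι := Module.Free.ChooseBasisIndex ℤ ↥O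
  have b : Module.Basis ι ℤ ↥O := Module.Free.chooseBasis ℤ ↥O
  have hcard : Fintype.card ι ≤ n := by
    rw [← Module.finrank_eq_card_chooseBasisIndex]; exact hrk
  let f : (ι → ℤ) →+ ↥O.toAddSubgroup := b.equivFun.symm.toLinearMap.toAddMonoidHom
  have hf : Function.Surjective f := b.equivFun.symm.surjective
  have h1 : (T.comap f).index = T.index := AddSubgroup.index_comap_of_surjective T hf
  let ρ : (ι → ℤ) →+ (ι → ZMod ℓ) :=
    AddMonoidHom.mk' (fun v i => ((v i : ZMod ℓ))) (by intro a b; funext i; push_cast; simp)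
  have hρ : Function.Surjective ρ := by
    intro w
    refine ⟨fun i => (ZMod.intCast_surjective (w i)).choose, funext fun i => ?_⟩
    exact (ZMod.intCast_surjective (w i)).choose_spec
  have hker : ρ.ker ≤ T.comap f := by
    intro v hv
    have hdvd : ∀ i, (ℓ:ℤ) ∣ v i := by
      intro i
      have : ((v i : ZMod ℓ)) = 0 := congrFun (AddMonoidHom.mem_ker.mp hv) i
      exact_mod_cast (ZMod.intCast_zmod_eq_zero_iff_dvd _ _).mp this
    choose w hw using hdvd
    have hv' : v = (ℓ:ℤ) • (w : ι → ℤ) := funext fun i => by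
      simpa [Pi.smul_apply, smul_eq_mul] using hw i
    have : f v = (ℓ:ℤ) • f w := by rw [hv', map_zsmul]
    simpa [AddSubgroup.mem_comap, this] using hT (f w)
  have h2 : T.index ∣ ρ.ker.index := by
    rw [← h1]; exact AddSubgroup.index_dvd_of_le hker
  have h3 : ρ.ker.index = ℓ ^ Fintype.card ι := by
    rw [AddSubgroup.index_ker, AddMonoidHom.range_eq_top.mpr hρ]
    rw [Nat.card_congr AddSubgroup.topEquiv.toEquiv, Nat.card_pi]
    simp [Nat.card_zmod]
  calc T.index ∣ ℓ ^ Fintype.card ι := h3 ▸ h2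
    _ ∣ ℓ ^ n := pow_dvd_pow ℓ hcard

/-- If A and B are orders of rank n in a number field K with ℤ + ℓA ⊆ B and
ℤ + ℓB ⊆ A for a prime ℓ, then the index [A + B : A ∩ B] divides ℓ^(n-1). -/
theorem stmt_2 (K : Type*) [Field K] [NumberField K] (n : ℕ) (hn : 1 ≤ n)
    (ℓ : ℕ) (hℓ : ℓ.Prime)
    (A B : Subalgebra ℤ K) (bA : Module.Basis (Fin n) ℤ A) (bB : Module.Basis (Fin n) ℤ B)
    (hAB : Submodule.span ℤ ({1} : Set K) ⊔ (ℓ : ℤ) • Subalgebra.toSubmodule A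
      ≤ Subalgebra.toSubmodule B)
    (hBA : Submodule.span ℤ ({1} : Set K) ⊔ (ℓ : ℤ) • Subalgebra.toSubmodule B
      ≤ Subalgebra.toSubmodule A) :
    modIndex (Subalgebra.toSubmodule A ⊔ Subalgebra.toSubmodule B)
        (Subalgebra.toSubmodule A ⊓ Subalgebra.toSubmodule B)
      ∣ ℓ ^ (n - 1) := by
  classical
  set A' := Subalgebra.toSubmodule A with hA'
  set B' := Subalgebra.toSubmodule B with hB'
  set O : Submodule ℤ K := A' ⊔ B' with hOdef
  set Z : Submodule ℤ K := Submodule.span ℤ ({1} : Set K) with hZdef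
  set L : Submodule ℤ K := (ℓ : ℤ) • O with hLdef
  have hℓ0 : (ℓ : ℕ) ≠ 0 := hℓ.ne_zero
  have hℓint : ((ℓ : ℤ)) ≠ 0 := by exact_mod_cast hℓ0
  -- smul membership helpers
  have hmemL : ∀ x ∈ O, (ℓ:ℤ) • x ∈ L := fun x hx =>
    Submodule.smul_mem_pointwise_smul x _ O hx
  have hmemL' : ∀ x ∈ L, ∃ y ∈ O, (ℓ:ℤ) • y = x := by
    intro x hx
    rw [← SetLike.mem_coe, hLdef, Submodule.coe_pointwise_smul] at hx
    rcases Set.mem_smul_set.mp hx with ⟨y, hy, rfl⟩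
    exact ⟨y, hy, rfl⟩
  -- L ≤ A' and L ≤ B'
  have hsmul_self : ∀ (S : Submodule ℤ K), (ℓ:ℤ) • S ≤ S := by
    intro S x hx
    rw [← SetLike.mem_coe, Submodule.coe_pointwise_smul] at hx
    rcases Set.mem_smul_set.mp hx with ⟨y, hy, rfl⟩
    exact S.smul_mem _ hy
  have hLA : L ≤ A' := by
    rw [hLdef, hOdef, Submodule.smul_sup']
    exact sup_le (hsmul_self A') (le_trans le_sup_right hBA)
  have hLB : L ≤ B' := by
    rw [hLdef, hOdef, Submodule.smul_sup']
    exact sup_le (le_trans le_sup_right hAB) (hsmul_self B')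
  have h1A : (1 : K) ∈ A' := A.one_mem
  have h1B : (1 : K) ∈ B' := B.one_mem
  have hZA : Z ≤ A' := by
    rw [hZdef, Submodule.span_le, Set.singleton_subset_iff]; exact h1A
  have hZB : Z ≤ B' := by
    rw [hZdef, Submodule.span_le, Set.singleton_subset_iff]; exact h1B
  have hA_le_O : A' ≤ O := le_sup_left
  have hZO : Z ≤ O := le_trans hZA hA_le_O
  have hLO : L ≤ O := le_trans hLA hA_le_O
  set N : Submodule ℤ K := Z ⊔ L with hNdef
  have hNO : N ≤ O := sup_le hZO hLO
  have hLN : L ≤ N := le_sup_right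
  have hNinf : N ≤ A' ⊓ B' := sup_le (le_inf hZA hZB) (le_inf hLA hLB)
  have hinfO : A' ⊓ B' ≤ O := le_trans inf_le_left hA_le_O
  -- finiteness of A', B', O
  have hAfin : Module.Finite ℤ A' := Module.Finite.of_basis bA
  have hBfin : Module.Finite ℤ B' := Module.Finite.of_basis bB
  have hOfin : Module.Finite ℤ O := by
    rw [hOdef]
    exact Module.Finite.iff_fg.mpr
      (Submodule.FG.sup (Module.Finite.iff_fg.mp hAfin) (Module.Finite.iff_fg.mp hBfin))
  -- integrality of elements of O
  have hint : ∀ x ∈ O, IsIntegral ℤ x := by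
    intro x hx
    rcases Submodule.mem_sup.mp hx with ⟨a, ha, b, hb, rfl⟩
    exact (IsIntegral.of_mem_of_fg A (Module.Finite.iff_fg.mp hAfin) a ha).add
      (IsIntegral.of_mem_of_fg B (Module.Finite.iff_fg.mp hBfin) b hb)
  -- cast membership in L means divisibility by ℓ
  have hdvd_of_cast : ∀ m : ℤ, (m : K) ∈ L → (ℓ:ℤ) ∣ m := by
    intro m hm
    rcases hmemL' _ hm with ⟨y, hy, hsm⟩
    have hyq : y = algebraMap ℚ K ((m:ℚ)/(ℓ:ℚ)) := by
      have hK : (ℓ:K) ≠ 0 := Nat.cast_ne_zero.mpr hℓ0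
      have h2 : (ℓ:K) * y = (m:K) := by rw [← hsm, zsmul_eq_mul]; push_cast; ring
      rw [map_div₀, map_intCast, map_natCast]
      field_simp
      linear_combination h2
    have hintq : IsIntegral ℤ ((m:ℚ)/(ℓ:ℚ)) := by
      have := hint y hy
      rw [hyq] at this
      exact (isIntegral_algebraMap_iff (algebraMap ℚ K).injective).mp this
    rcases IsIntegrallyClosed.isIntegral_iff.mp hintq with ⟨k, hk⟩
    refine ⟨k, ?_⟩
    have hQ : (ℓ:ℚ) ≠ 0 := Nat.cast_ne_zero.mpr hℓ0
    have hk' : (k:ℚ) = (m:ℚ)/(ℓ:ℚ) := by rw [← hk]; simp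
    have : (m:ℚ) = (ℓ:ℚ) * (k:ℚ) := by rw [hk']; field_simp
    exact_mod_cast this
  -- [ℤ + ℓO : ℓO] = ℓ
  have hcomap : AddSubgroup.comap (Int.castAddHom K) L.toAddSubgroup
      = AddSubgroup.zmultiples ((ℓ:ℤ)) := by
    ext m
    simp only [AddSubgroup.mem_comap, Int.coe_castAddHom, Submodule.mem_toAddSubgroup,
      AddSubgroup.mem_zmultiples_iff]
    constructor
    · intro h
      rcases hdvd_of_cast m h with ⟨k, hk⟩
      exact ⟨k, by rw [hk]; simp [smul_eq_mul, mul_comm]⟩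
    · rintro ⟨k, rfl⟩
      have h1 : (1:K) ∈ O := hZO (Submodule.mem_span_singleton_self _)
      have : ((k • (ℓ:ℤ) : ℤ) : K) = (ℓ:ℤ) • ((k : ℤ) : K) := by
        push_cast [smul_eq_mul, zsmul_eq_mul]; ring
      rw [this]
      refine hmemL _ ?_
      have : ((k:ℤ):K) = (k:ℤ) • (1:K) := by simp
      rw [this]
      exact O.smul_mem _ h1
  have hrange : (Int.castAddHom K).range = Z.toAddSubgroup := by
    ext x
    simp only [AddMonoidHom.mem_range, Int.coe_castAddHom, Submodule.mem_toAddSubgroup, hZdef,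
      Submodule.mem_span_singleton]
    constructor
    · rintro ⟨m, rfl⟩; exact ⟨m, by simp⟩
    · rintro ⟨m, rfl⟩; exact ⟨m, by simp⟩
  have hZrel : L.toAddSubgroup.relIndex Z.toAddSubgroup = ℓ := by
    have h := AddSubgroup.relIndex_comap (Int.castAddHom K) (H := L.toAddSubgroup)
        (⊤ : AddSubgroup ℤ)
    rw [AddSubgroup.relIndex_top_right, hcomap, Int.index_zmultiples] at h
    rw [← AddMonoidHom.range_eq_map, hrange] at h
    omega
  have hNrel : L.toAddSubgroup.relIndex N.toAddSubgroup = ℓ := by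
    rw [hNdef, toAddSubgroup_sup', AddSubgroup.relIndex_sup_right]
    exact hZrel
  -- finrank of O is at most n
  have hfA : Module.finrank ℤ A' = n := by
    rw [Module.finrank_eq_card_basis (M := ↥A') bA, Fintype.card_fin]
  have hg : ∃ g : ↥O →ₗ[ℤ] ↥A', Function.Injective g := by
    refine ⟨LinearMap.codRestrict A' ((ℓ:ℤ) • O.subtype) (fun x => ?_), ?_⟩
    · exact hLA (hmemL _ x.2)
    · intro x y hxy
      have : (ℓ:ℤ) • (x : K) = (ℓ:ℤ) • (y : K) := congrArg Subtype.val hxy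
      have := smul_right_injective K hℓint this
      exact Subtype.ext this
  have hrk : Module.finrank ℤ O ≤ n := by
    rcases hg with ⟨g, hginj⟩
    rw [← hfA]
    exact LinearMap.finrank_le_finrank_of_injective hginj
  -- [O : ℓO] ∣ ℓ^n
  have hT : ∀ x : ↥O, (ℓ:ℤ) • x ∈ L.toAddSubgroup.addSubgroupOf O.toAddSubgroup := by
    intro x
    rw [AddSubgroup.mem_addSubgroupOf]
    exact hmemL _ x.2
  have hLOrel : L.toAddSubgroup.relIndex O.toAddSubgroup ∣ ℓ ^ n :=
    index_dvd_pow_of_smul_mem O _ n hrk ℓ hT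
  -- combine
  have hmul := AddSubgroup.relIndex_mul_relIndex L.toAddSubgroup N.toAddSubgroup O.toAddSubgroup
    ((Submodule.toAddSubgroup_le _ _).mpr hLN) ((Submodule.toAddSubgroup_le _ _).mpr hNO)
  rw [hNrel] at hmul
  have hNfinal : N.toAddSubgroup.relIndex O.toAddSubgroup ∣ ℓ ^ (n - 1) := by
    have hd : ℓ * N.toAddSubgroup.relIndex O.toAddSubgroup ∣ ℓ * ℓ ^ (n - 1) := by
      rw [hmul]
      have : ℓ * ℓ ^ (n - 1) = ℓ ^ n := by
        conv_rhs => rw [show n = (n - 1) + 1 by omega]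
        rw [pow_succ]
        ring
      rw [this]
      exact hLOrel
    exact (mul_dvd_mul_iff_left hℓ0).mp hd
  have hfinal : (A' ⊓ B').toAddSubgroup.relIndex O.toAddSubgroup
      ∣ N.toAddSubgroup.relIndex O.toAddSubgroup :=
    AddSubgroup.relIndex_dvd_of_le_left O.toAddSubgroup ((Submodule.toAddSubgroup_le _ _).mpr hNinf)
  exact dvd_trans hfinal hNfinal
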